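/- Let M ⊆ ℝ² be a Lebesgue measurable set of finite Lebesgue measure which is an annulus centered at the origin, i.e., there is a measurable set M₀ ⊆ [0,∞) with λ(M Δ {x : ‖x‖ ∈ M₀}) = 0. Suppose that for some unit vector u ∈ ℝ² the Steiner symmetral of M in direction u satisfies λ(S_u M Δ M) = 0. Then M coincides, up to a set of Lebesgue measure zero, with a ball centered at the origin. -/

import Mathlib

open MeasureTheory

/-- The plane `ℝ²`. -/
abbrev Plane := EuclideanSpace ℝ (Fin 2)

/-- The Steiner symmetral (with open segments) of a set `M ⊆ ℝ²` in the direction of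
the unit vector `u`: for each point `x` on the line `u^⊥` through the origin orthogonal
to `u`, the intersection of `S_u M` with the line `x + ℝ u` is the segment centered at
`x` of length the 1-dimensional (outer) Lebesgue measure of `M ∩ (x + ℝ u)`. -/
noncomputable def steinerSymmetral (u : Plane) (M : Set Plane) : Set Plane :=
  {y | ∃ (x : Plane) (t : ℝ), inner ℝ x u = (0 : ℝ) ∧ y = x + t • u ∧
    ENNReal.ofReal (2 * |t|) < volume {s : ℝ | x + s • u ∈ M}}

/-!
Choose `v` with `(v, u)` orthonormal and use the coordinates `(a, t) ↦ a • v + t • u`. By Fubini,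
for almost every `a` the line `t ↦ a • v + t • u` meets `M` in a set of finite length which agrees
a.e. both with the radial section `{t | √(a² + t²) ∈ M₀}` and with its centered rearrangement, the
corresponding section of `S_u M`. Since `t ↦ √(a² + t²)` is 1-Lipschitz and maps the centered
interval `(-c, c)` onto `[|a|, √(a² + c²))`, this forces `M₀ ∩ [a, ∞)` to be a.e. an interval
`[a, ρ)`. Letting `a → 0` along such levels shows that `M₀` is a.e. `[0, r)`, so the annulus is a.e.
the ball of radius `r`: sets of radii of measure zero give planar null sets by polar coordinates.
-/

open Set

section PreimageNorm

variable {E : Type*} [NormedAddCommGroup E] [NormedSpace ℝ E] [MeasurableSpace E] [BorelSpace E]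
  [FiniteDimensional ℝ E] [Nontrivial E] (μ : Measure E) [μ.IsAddHaarMeasure]

theorem measure_preimage_norm_eq_zero {s : Set ℝ} (hs : volume s = 0) :
    μ (norm ⁻¹' s) = 0 := by
  set T := toMeasurable volume s
  have hT : volume T = 0 := by rwa [measure_toMeasurable]
  set f : ℝ → ℝ := T.indicator 1
  have hf : f =ᵐ[volume] 0 :=
    measure_mono_null (fun y hy => by by_contra h; exact hy (indicator_of_notMem h _)) hT
  have hg : (fun y : ℝ => y ^ (Module.finrank ℝ E - 1) • f y) =ᵐ[volume] 0 := by
    filter_upwards [hf] with y hy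
    simp [hy]
  have hint : Integrable (fun x : E => f ‖x‖) μ :=
    (integrable_fun_norm_addHaar μ).2 ((integrable_zero _ _ _).congr hg.symm).integrableOn
  have hzero : ∫ x, f ‖x‖ ∂μ = 0 := by
    rw [integral_fun_norm_addHaar, integral_congr_ae (ae_restrict_of_ae hg)]
    simp
  have hae := (integral_eq_zero_iff_of_nonneg (fun x => indicator_nonneg (by simp) _) hint).1 hzero
  refine measure_mono_null (fun x hx => ?_) (ae_iff.1 hae)
  simpa using subset_toMeasurable volume s hx

theorem preimage_norm_ae_eq {s t : Set ℝ} (h : s =ᵐ[volume] t) : norm ⁻¹' s =ᵐ[μ] norm ⁻¹' t := by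
  rw [← measure_symmDiff_eq_zero_iff, ← preimage_symmDiff] at *
  exact measure_preimage_norm_eq_zero μ h

end PreimageNorm

noncomputable def centeredSegment (F : Set ℝ) : Set ℝ :=
  {t | ENNReal.ofReal (2 * |t|) < volume F}

theorem centeredSegment_congr {F G : Set ℝ} (h : F =ᵐ[volume] G) :
    centeredSegment F = centeredSegment G := by
  simp only [centeredSegment, measure_congr h]

theorem centeredSegment_eq_Ioo {F : Set ℝ} (hF : volume F ≠ ⊤) :
    centeredSegment F = Ioo (-((volume F).toReal / 2)) ((volume F).toReal / 2) := by
  ext t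
  rw [centeredSegment, mem_ofPred_eq, ENNReal.ofReal_lt_iff_lt_toReal (by positivity) hF, mem_Ioo,
    ← abs_lt]
  constructor <;> intro h <;> linarith

theorem lipschitzWith_sqrt_sq_add_sq (a : ℝ) : LipschitzWith 1 fun t : ℝ => √(a ^ 2 + t ^ 2) := by
  have hline : LipschitzWith 1 fun t : ℝ => (a : ℂ) + t * Complex.I :=
    LipschitzWith.of_dist_le_mul fun s t => by simp [dist_eq_norm, ← sub_mul, ← Complex.ofReal_sub]
  simpa [Function.comp_def, Complex.norm_add_mul_I] using lipschitzWith_one_norm.comp hline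

/-- The section of the annulus `{x : ‖x‖ ∈ S}` by the line at distance `|a|` from the origin. -/
def radialSection (S : Set ℝ) (a : ℝ) : Set ℝ :=
  (fun t : ℝ => √(a ^ 2 + t ^ 2)) ⁻¹' S

theorem volume_inter_Ici_abs_le_volume_radialSection (S : Set ℝ) (a : ℝ) :
    volume (S ∩ Ici |a|) ≤ volume (radialSection S a) := by
  have hrange : Ici |a| ⊆ range fun t : ℝ => √(a ^ 2 + t ^ 2) := fun s hs => by
    have hs0 : 0 ≤ s := (abs_nonneg a).trans hs
    have has : a ^ 2 ≤ s ^ 2 := sq_le_sq.2 (by rwa [abs_of_nonneg hs0])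
    refine ⟨√(s ^ 2 - a ^ 2), ?_⟩
    dsimp only
    rw [Real.sq_sqrt (sub_nonneg.2 has), add_sub_cancel, Real.sqrt_sq hs0]
  have himage := ((lipschitzWith_sqrt_sq_add_sq a).lipschitzOnWith (s := radialSection S a))
    |>.hausdorffMeasure_image_le zero_le_one
  rw [hausdorffMeasure_real, ENNReal.rpow_one, radialSection, image_preimage_eq_inter_range]
    at himage
  simpa [radialSection] using (measure_mono (inter_subset_inter_right S hrange)).trans himage

theorem radialSection_Iio (a : ℝ) {c : ℝ} (hc : 0 ≤ c) :
    radialSection (Iio √(a ^ 2 + c ^ 2)) a = Ioo (-c) c := by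
  ext t
  rw [radialSection, mem_preimage, mem_Iio, Real.sqrt_lt_sqrt_iff (by positivity), mem_Ioo,
    ← abs_lt, add_lt_add_iff_left, sq_lt_sq, abs_of_nonneg hc]

theorem exists_inter_Ici_ae_eq_Ico {M₀ : Set ℝ} {a : ℝ} (ha : 0 ≤ a)
    (hfin : volume (radialSection M₀ a) ≠ ⊤)
    (hcent : radialSection M₀ a =ᵐ[volume] centeredSegment (radialSection M₀ a)) :
    ∃ ρ, a ≤ ρ ∧ (M₀ ∩ Ici a : Set ℝ) =ᵐ[volume] (Ico a ρ : Set ℝ) := by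
  set c := (volume (radialSection M₀ a)).toReal / 2
  have hc : 0 ≤ c := by positivity
  refine ⟨√(a ^ 2 + c ^ 2), Real.le_sqrt_of_sq_le (by nlinarith), ?_⟩
  rw [centeredSegment_eq_Ioo hfin, ← radialSection_Iio a hc, ← measure_symmDiff_eq_zero_iff,
    radialSection, radialSection, ← preimage_symmDiff] at hcent
  have hnull := nonpos_iff_eq_zero.1
    ((volume_inter_Ici_abs_le_volume_radialSection _ a).trans_eq hcent)
  rw [abs_of_nonneg ha] at hnull
  rw [← measure_symmDiff_eq_zero_iff]
  convert hnull using 2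
  ext s
  simp only [mem_symmDiff, mem_inter_iff, mem_Ico, mem_Iio, mem_Ici]
  tauto

theorem volume_le_volume_inter_Ici_add {M₀ : Set ℝ} (hM₀ : M₀ ⊆ Ici 0) (a : ℝ) :
    volume M₀ ≤ volume (M₀ ∩ Ici a) + ENNReal.ofReal a := by
  calc volume M₀ ≤ volume (M₀ ∩ Ici a) + volume (Ico 0 a) := by
        refine (measure_mono fun s hs => ?_).trans (measure_union_le _ _)
        by_cases hsa : a ≤ s
        exacts [Or.inl ⟨hs, hsa⟩, Or.inr ⟨hM₀ hs, not_le.1 hsa⟩]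
    _ = volume (M₀ ∩ Ici a) + ENNReal.ofReal a := by rw [Real.volume_Ico, sub_zero]

theorem volume_symmDiff_Ico_le {M₀ : Set ℝ} (hM₀ : M₀ ⊆ Ici 0) (hfin : volume M₀ ≠ ⊤)
    {a ρ : ℝ} (ha : 0 ≤ a) (haρ : a ≤ ρ) (h : (M₀ ∩ Ici a : Set ℝ) =ᵐ[volume] (Ico a ρ : Set ℝ)) :
    volume (symmDiff M₀ (Ico 0 (volume M₀).toReal)) ≤ ENNReal.ofReal (2 * a) := by
  set r := (volume M₀).toReal
  have hvol : volume (M₀ ∩ Ici a) = ENNReal.ofReal (ρ - a) := by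
    rw [measure_congr h, Real.volume_Ico]
  have hρr : ρ - a ≤ r :=
    (ENNReal.ofReal_le_iff_le_toReal hfin).1 (hvol ▸ measure_mono inter_subset_left)
  have hrρ : r ≤ ρ := by
    have := volume_le_volume_inter_Ici_add hM₀ a
    rw [hvol, ← ENNReal.ofReal_add (sub_nonneg.2 haρ) ha, sub_add_cancel] at this
    exact ENNReal.toReal_le_of_le_ofReal (ha.trans haρ) this
  have hcover : symmDiff M₀ (Ico 0 r) ⊆ Ico 0 a ∪ symmDiff (M₀ ∩ Ici a) (Ico a ρ) ∪ Ico r ρ := by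
    intro s hs
    have hs0 : 0 ≤ s := by rcases mem_symmDiff.1 hs with h | h; exacts [hM₀ h.1, h.1.1]
    simp only [mem_union, mem_symmDiff, mem_inter_iff, mem_Ico, mem_Ici] at hs ⊢
    grind
  calc volume (symmDiff M₀ (Ico 0 r))
      ≤ volume (Ico 0 a) + volume (symmDiff (M₀ ∩ Ici a) (Ico a ρ)) + volume (Ico r ρ) :=
        (measure_mono hcover).trans <| (measure_union_le _ _).trans <| by
          gcongr; exact measure_union_le _ _
    _ ≤ ENNReal.ofReal a + 0 + ENNReal.ofReal a := by
        rw [measure_symmDiff_eq_zero_iff.2 h, Real.volume_Ico, Real.volume_Ico, sub_zero]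
        gcongr
        linarith
    _ = ENNReal.ofReal (2 * a) := by rw [add_zero, ← ENNReal.ofReal_add ha ha, two_mul]

theorem exists_ae_eq_Ico_of_forall_inter_Ici {M₀ : Set ℝ} (hM₀ : M₀ ⊆ Ici 0)
    (h : ∀ ε > 0, ∃ a ∈ Ico 0 ε, ∃ ρ, a ≤ ρ ∧
      (M₀ ∩ Ici a : Set ℝ) =ᵐ[volume] (Ico a ρ : Set ℝ)) :
    ∃ r, 0 ≤ r ∧ M₀ =ᵐ[volume] Ico 0 r := by
  have hfin : volume M₀ ≠ ⊤ := by
    obtain ⟨a, -, ρ, -, ha⟩ := h 1 one_pos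
    refine ne_top_of_le_ne_top ?_ (volume_le_volume_inter_Ici_add hM₀ a)
    rw [measure_congr ha, Real.volume_Ico]
    exact ENNReal.add_ne_top.2 ⟨ENNReal.ofReal_ne_top, ENNReal.ofReal_ne_top⟩
  refine ⟨(volume M₀).toReal, ENNReal.toReal_nonneg, measure_symmDiff_eq_zero_iff.1 ?_⟩
  refine le_antisymm (ENNReal.le_of_forall_pos_le_add fun ε hε _ => ?_) bot_le
  obtain ⟨a, ⟨ha, haε⟩, ρ, haρ, hρ⟩ := h (ε / 2) (by positivity)
  calc _ ≤ ENNReal.ofReal (2 * a) := volume_symmDiff_Ico_le hM₀ hfin ha haρ hρ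
    _ ≤ 0 + ε := by
        rw [zero_add, ← ENNReal.ofReal_coe_nnreal]
        exact ENNReal.ofReal_le_ofReal (by linarith)

section OrthonormalPair

variable {E : Type*} [NormedAddCommGroup E] [InnerProductSpace ℝ E] {v u : E}

theorem Orthonormal.norm_smul_add_smul (h : Orthonormal ℝ ![v, u]) (a t : ℝ) :
    ‖a • v + t • u‖ = √(a ^ 2 + t ^ 2) := by
  have hv : ‖v‖ = 1 := h.1 0
  have hu : ‖u‖ = 1 := h.1 1
  have hvu : inner ℝ v u = (0 : ℝ) := h.inner_eq_zero zero_ne_one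
  have horth : inner ℝ (a • v) (t • u) = (0 : ℝ) := by
    rw [real_inner_smul_left, real_inner_smul_right, hvu, mul_zero, mul_zero]
  rw [eq_comm, Real.sqrt_eq_iff_eq_sq (by positivity) (norm_nonneg _), sq ‖_‖,
    norm_add_sq_eq_norm_sq_add_norm_sq_real horth, norm_smul, norm_smul, hv, hu, mul_one, mul_one,
    Real.norm_eq_abs, Real.norm_eq_abs, abs_mul_abs_self, abs_mul_abs_self, sq, sq]

variable [FiniteDimensional ℝ E] [MeasurableSpace E] [BorelSpace E]

theorem Orthonormal.measurePreserving_smul_add_smul (hE : Module.finrank ℝ E = 2)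
    (h : Orthonormal ℝ ![v, u]) :
    MeasurePreserving (fun p : ℝ × ℝ => p.1 • v + p.2 • u) volume volume := by
  let b : OrthonormalBasis (Fin 2) ℝ E := OrthonormalBasis.mk h
    (h.linearIndependent.span_eq_top_of_card_eq_finrank (by simp [hE])).ge
  have hcoord : (fun p : ℝ × ℝ => p.1 • v + p.2 • u) = b.repr.symm ∘
      (MeasurableEquiv.toLp 2 (Fin 2 → ℝ)) ∘ MeasurableEquiv.finTwoArrow.symm := by
    ext p
    simp [← b.sum_repr_symm, b, Fin.sum_univ_two]
  rw [hcoord]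
  exact b.measurePreserving_repr_symm.comp
    ((EuclideanSpace.volume_preserving_symm_measurableEquiv_toLp (Fin 2)).symm.comp
      (volume_preserving_finTwoArrow ℝ).symm)

theorem Orthonormal.ae_preimage_line_ae_eq (hE : Module.finrank ℝ E = 2)
    (h : Orthonormal ℝ ![v, u]) {S T : Set E} (hST : S =ᵐ[volume] T) :
    ∀ᵐ a : ℝ, (fun t : ℝ => a • v + t • u) ⁻¹' S =ᵐ[volume] (fun t : ℝ => a • v + t • u) ⁻¹' T := by
  rw [← measure_symmDiff_eq_zero_iff] at hST
  have hnull := (h.measurePreserving_smul_add_smul hE).quasiMeasurePreserving.preimage_null hST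
  rw [Measure.volume_eq_prod] at hnull
  filter_upwards [Measure.measure_ae_null_of_prod_null hnull] with a ha
  exact measure_symmDiff_eq_zero_iff.1 ha

theorem Orthonormal.ae_volume_preimage_line_lt_top (hE : Module.finrank ℝ E = 2)
    (h : Orthonormal ℝ ![v, u]) {S : Set E} (hS : volume S ≠ ⊤) :
    ∀ᵐ a : ℝ, volume ((fun t : ℝ => a • v + t • u) ⁻¹' S) < ⊤ := by
  have hmp := h.measurePreserving_smul_add_smul hE
  set S' := (fun p : ℝ × ℝ => p.1 • v + p.2 • u) ⁻¹' toMeasurable volume S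
  have hS' : MeasurableSet S' := hmp.measurable (measurableSet_toMeasurable _ _)
  have hlt : ∫⁻ a, volume (Prod.mk a ⁻¹' S') ≠ ⊤ := by
    rwa [← Measure.prod_apply hS', ← Measure.volume_eq_prod,
      hmp.measure_preimage (measurableSet_toMeasurable _ _).nullMeasurableSet, measure_toMeasurable]
  filter_upwards [ae_lt_top (measurable_measure_prodMk_left hS') hlt] with a ha
  have hsub : (fun t : ℝ => a • v + t • u) ⁻¹' S ⊆ Prod.mk a ⁻¹' S' :=
    fun t ht => subset_toMeasurable volume S ht
  exact (measure_mono hsub).trans_lt ha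

end OrthonormalPair

theorem exists_orthonormal_pair {u : Plane} (hu : ‖u‖ = 1) :
    ∃ v : Plane, Orthonormal ℝ ![v, u] := by
  refine ⟨!₂[-u 1, u 0], ?_⟩
  have hnorm : ‖(!₂[-u 1, u 0] : Plane)‖ = ‖u‖ := by
    simp [EuclideanSpace.norm_eq, Fin.sum_univ_two, add_comm]
  have hinner : inner ℝ (!₂[-u 1, u 0] : Plane) u = (0 : ℝ) := by
    simp [PiLp.inner_apply, Fin.sum_univ_two]
    ring
  rw [orthonormal_iff_ite]
  intro i j
  fin_cases i <;> fin_cases j <;>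
    simp [hnorm, hu, hinner, real_inner_comm _ u]

theorem preimage_line_steinerSymmetral {v u : Plane} (hvu : inner ℝ v u = (0 : ℝ)) (hu : ‖u‖ = 1)
    (M : Set Plane) (a : ℝ) :
    (fun t : ℝ => a • v + t • u) ⁻¹' steinerSymmetral u M =
      centeredSegment ((fun t : ℝ => a • v + t • u) ⁻¹' M) := by
  have huu : inner ℝ u u = (1 : ℝ) := by rw [real_inner_self_eq_norm_sq, hu, one_pow]
  ext t
  constructor
  · rintro ⟨x, s, hx, hxs, hlt⟩
    have hs : s = t := by
      have := congr_arg (inner ℝ · u) hxs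
      simp only [inner_add_left, real_inner_smul_left, hvu, huu, hx] at this
      linarith
    subst hs
    rw [add_left_injective (s • u) hxs]
    exact hlt
  · intro ht
    exact ⟨a • v, t, by rw [real_inner_smul_left, hvu, mul_zero], rfl, ht⟩

theorem stmt_10_general (M : Set Plane) (hMfin : volume M < ⊤)
    (M₀ : Set ℝ) (hM₀ : M₀ ⊆ Set.Ici 0)
    (hann : volume (symmDiff M {x : Plane | ‖x‖ ∈ M₀}) = 0)
    (u : Plane) (hu : ‖u‖ = 1)
    (hsym : volume (symmDiff (steinerSymmetral u M) M) = 0) :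
    ∃ r : ℝ, 0 ≤ r ∧ volume (symmDiff M (Metric.ball (0 : Plane) r)) = 0 := by
  obtain ⟨v, hvu⟩ := exists_orthonormal_pair hu
  have hE : Module.finrank ℝ Plane = 2 := finrank_euclideanSpace_fin
  have hann' := measure_symmDiff_eq_zero_iff.1 hann
  have hsections : ∀ᵐ a : ℝ, volume (radialSection M₀ a) ≠ ⊤ ∧
      radialSection M₀ a =ᵐ[volume] centeredSegment (radialSection M₀ a) := by
    filter_upwards [hvu.ae_preimage_line_ae_eq hE hann',
      hvu.ae_preimage_line_ae_eq hE (measure_symmDiff_eq_zero_iff.1 hsym),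
      hvu.ae_volume_preimage_line_lt_top hE hMfin.ne] with a hMA hSM hfin
    have hA : (fun t : ℝ => a • v + t • u) ⁻¹' {x | ‖x‖ ∈ M₀} = radialSection M₀ a := by
      ext t
      simp [radialSection, hvu.norm_smul_add_smul]
    rw [hA] at hMA
    rw [preimage_line_steinerSymmetral (v := v) (u := u) (hvu.inner_eq_zero zero_ne_one) hu,
      centeredSegment_congr hMA] at hSM
    exact ⟨measure_congr hMA ▸ hfin.ne, hMA.symm.trans hSM.symm⟩
  obtain ⟨r, hr, hM₀r⟩ := exists_ae_eq_Ico_of_forall_inter_Ici hM₀ fun ε hε => by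
    obtain ⟨a, ha, hfin, hcent⟩ := Measure.exists_mem_of_measure_ne_zero_of_ae
      (s := Ico 0 ε) (by simpa using hε) (ae_restrict_of_ae hsections)
    exact ⟨a, ha, exists_inter_Ici_ae_eq_Ico ha.1 hfin hcent⟩
  have hball : norm ⁻¹' Ico 0 r = Metric.ball (0 : Plane) r := by ext x; simp
  exact ⟨r, hr,
    measure_symmDiff_eq_zero_iff.2 (hann'.trans (hball ▸ preimage_norm_ae_eq volume hM₀r))⟩

/-- Let `M ⊆ ℝ²` be a measurable set of finite measure which is an
annulus centered at the origin, i.e. there is a measurable `M₀ ⊆ [0,∞)` with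
`λ(M Δ {x : ‖x‖ ∈ M₀}) = 0`.  If for some unit vector `u` the Steiner symmetral of `M`
in direction `u` satisfies `λ(S_u M Δ M) = 0`, then `M` coincides up to a set of
measure zero with a ball centered at the origin. -/
theorem stmt_10 (M : Set Plane) (hM : MeasurableSet M) (hMfin : volume M < ⊤)
    (M₀ : Set ℝ) (hM₀ : M₀ ⊆ Set.Ici 0) (hM₀meas : MeasurableSet M₀)
    (hann : volume (symmDiff M {x : Plane | ‖x‖ ∈ M₀}) = 0)
    (u : Plane) (hu : ‖u‖ = 1)
    (hsym : volume (symmDiff (steinerSymmetral u M) M) = 0) :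
    ∃ r : ℝ, 0 ≤ r ∧ volume (symmDiff M (Metric.ball (0 : Plane) r)) = 0 :=
  stmt_10_general M hMfin M₀ hM₀ hann u hu hsym
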